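/- arXiv:1412.0620 — 7 statements merged into one kernel-verified Lean document; each statement's English description precedes it below -/
import Mathlib

section
/- Let 𝒮 be a finite nonempty set with probability weights w : 𝒮 → [0,1] satisfying Σ_{s∈𝒮} w_s = 1, let c > 1, and let y, g : 𝒮 → ℝ satisfy c⁻¹ ≤ y_s ≤ c and c⁻¹ ≤ g_s ≤ c for all s ∈ 𝒮. Define R = Σ_{s∈𝒮} w_s·(−y_s·log g_s + g_s) and L = Σ_{s∈𝒮} w_s·(y_s − g_s)². Then (1/(2c³))·L + (−c·log c + c⁻¹) ≤ R ≤ (c³/2)·L + (c⁻¹·log c + c). In particular the loss R majorizes and minorizes the squared loss L up to affine transformations with explicit constants depending only on c. -/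
/-!
Write the summand as `-y log g + g = (y - y log y) + D(y, g)` with
`D(a, b) = (b - a log b) - (a - a log a)`. For fixed `a`, the map `b ↦ b - a log b` has derivative
`(b - a) / b`, so subtracting `m/2 (b - a)²` (resp. `M/2 (b - a)²`) from it leaves a function
minimised (resp. maximised) at `a` as long as `m ≤ 1/x ≤ M` between `a` and `b`. On `[c⁻¹, c]` one
may take `m = c⁻³` and `M = c³`, while `y - y log y` lies in `[c⁻¹ - c log c, 1]`. Averaging the
pointwise bounds against the probability weights gives the claim.
-/

open Real Set Finset

lemma le_of_hasDerivAt_of_nonneg_mul_sub {f f' : ℝ → ℝ} {a b : ℝ}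
    (hf : ∀ x ∈ uIcc a b, HasDerivAt f (f' x) x) (hf' : ∀ x ∈ uIcc a b, 0 ≤ f' x * (x - a)) :
    f a ≤ f b := by
  have hcont : ContinuousOn f (uIcc a b) := fun x hx => (hf x hx).continuousAt.continuousWithinAt
  have hderiv : ∀ x ∈ interior (uIcc a b), HasDerivWithinAt f (f' x) (interior (uIcc a b)) x :=
    fun x hx => (hf x (interior_subset hx)).hasDerivWithinAt
  rcases le_total a b with hab | hba
  · rw [uIcc_of_le hab] at hcont hderiv hf'
    refine monotoneOn_of_hasDerivWithinAt_nonneg (convex_Icc a b) hcont hderiv (fun x hx => ?_)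
      (left_mem_Icc.2 hab) (right_mem_Icc.2 hab) hab
    rw [interior_Icc] at hx
    exact nonneg_of_mul_nonneg_left (hf' x (Ioo_subset_Icc_self hx)) (sub_pos.2 hx.1)
  · rw [uIcc_of_ge hba] at hcont hderiv hf'
    refine antitoneOn_of_hasDerivWithinAt_nonpos (convex_Icc b a) hcont hderiv (fun x hx => ?_)
      (left_mem_Icc.2 hba) (right_mem_Icc.2 hba) hba
    rw [interior_Icc] at hx
    exact nonpos_of_mul_nonneg_left (hf' x (Ioo_subset_Icc_self hx)) (sub_neg.2 hx.2)

section IDivergence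

variable {a b : ℝ}

lemma hasDerivAt_sub_mul_log {x : ℝ} (hx : 0 < x) :
    HasDerivAt (fun x => x - a * log x) ((x - a) * x⁻¹) x :=
  ((hasDerivAt_id' x).sub ((hasDerivAt_log hx.ne').const_mul a)).congr_deriv (by field_simp)

lemma hasDerivAt_sub_sq_div_two {x : ℝ} : HasDerivAt (fun x => (x - a) ^ 2 / 2) (x - a) x :=
  ((((hasDerivAt_id' x).sub_const a).pow 2).div_const 2).congr_deriv (by ring)

lemma pos_of_mem_uIcc (ha : 0 < a) (hb : 0 < b) {x : ℝ} (hx : x ∈ uIcc a b) : 0 < x :=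
  (lt_min ha hb).trans_le hx.1

lemma mul_sq_le_sub_mul_log_sub (ha : 0 < a) (hb : 0 < b) {m : ℝ} (hm : m * max a b ≤ 1) :
    m * ((b - a) ^ 2 / 2) ≤ (b - a * log b) - (a - a * log a) := by
  have key := le_of_hasDerivAt_of_nonneg_mul_sub (a := a) (b := b)
    (f := fun x => (x - a * log x) - m * ((x - a) ^ 2 / 2))
    (fun x hx => (hasDerivAt_sub_mul_log (pos_of_mem_uIcc ha hb hx)).sub
      (hasDerivAt_sub_sq_div_two.const_mul m))
    (fun x hx => by
      have hx0 := pos_of_mem_uIcc ha hb hx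
      have hmx : m * x ≤ 1 := by nlinarith [hx.2, le_max_left a b]
      calc 0 ≤ (x - a) ^ 2 * x⁻¹ * (1 - m * x) := by have := sub_nonneg.2 hmx; positivity
        _ = _ := by field_simp)
  simp only [sub_self] at key
  linarith

lemma sub_mul_log_sub_le_mul_sq (ha : 0 < a) (hb : 0 < b) {M : ℝ} (hM : 1 ≤ M * min a b) :
    (b - a * log b) - (a - a * log a) ≤ M * ((b - a) ^ 2 / 2) := by
  have key := le_of_hasDerivAt_of_nonneg_mul_sub (a := a) (b := b)
    (f := fun x => M * ((x - a) ^ 2 / 2) - (x - a * log x))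
    (fun x hx => (hasDerivAt_sub_sq_div_two.const_mul M).sub
      (hasDerivAt_sub_mul_log (pos_of_mem_uIcc ha hb hx)))
    (fun x hx => by
      have hx0 := pos_of_mem_uIcc ha hb hx
      have hM0 : 0 ≤ M := by nlinarith [lt_min ha hb]
      have hMx : 1 ≤ M * x := hM.trans (mul_le_mul_of_nonneg_left hx.1 hM0)
      calc 0 ≤ (x - a) ^ 2 * x⁻¹ * (M * x - 1) := by have := sub_nonneg.2 hMx; positivity
        _ = _ := by field_simp)
  simp only [sub_self] at key
  linarith

end IDivergence

lemma sub_mul_log_le_one {a : ℝ} (ha : 0 ≤ a) : a - a * log a ≤ 1 := by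
  have := negMulLog_le_one_sub_self ha
  rw [negMulLog] at this
  linarith

lemma mul_log_le_mul_log {a c : ℝ} (ha : 0 < a) (hac : a ≤ c) (hc : 1 ≤ c) :
    a * log a ≤ c * log c :=
  calc a * log a ≤ a * log c := mul_le_mul_of_nonneg_left (log_le_log ha hac) ha.le
    _ ≤ c * log c := mul_le_mul_of_nonneg_right hac (log_nonneg hc)

lemma sum_mul_mul_add_const {ι : Type*} [Fintype ι] {w : ι → ℝ} (hw : ∑ i, w i = 1)
    (k C : ℝ) (q : ι → ℝ) : ∑ i, w i * (k * q i + C) = k * ∑ i, w i * q i + C := by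
  calc ∑ i, w i * (k * q i + C) = ∑ i, (k * (w i * q i) + w i * C) :=
        sum_congr rfl fun i _ => by ring
    _ = _ := by rw [sum_add_distrib, ← mul_sum, ← sum_mul, hw, one_mul]

lemma affine_bounds_of_mem_Icc {c a b : ℝ} (hc : 1 < c) (ha : a ∈ Icc c⁻¹ c) (hb : b ∈ Icc c⁻¹ c) :
    1 / (2 * c ^ 3) * (a - b) ^ 2 + (-c * log c + c⁻¹) ≤ -a * log b + b ∧
      -a * log b + b ≤ c ^ 3 / 2 * (a - b) ^ 2 + (c⁻¹ * log c + c) := by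
  have hc0 : 0 < c := one_pos.trans hc
  have ha0 : 0 < a := (inv_pos.2 hc0).trans_le ha.1
  have hb0 : 0 < b := (inv_pos.2 hc0).trans_le hb.1
  have hc3 : c ≤ c ^ 3 := le_self_pow₀ hc.le (by norm_num)
  have hsplit : -a * log b + b = (a - a * log a) + ((b - a * log b) - (a - a * log a)) := by ring
  have hsq : (b - a) ^ 2 = (a - b) ^ 2 := by ring
  constructor
  · have hm : (c ^ 3)⁻¹ * max a b ≤ 1 :=
      (inv_mul_le_one₀ (by positivity)).2 ((max_le ha.2 hb.2).trans hc3)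
    have hD := mul_sq_le_sub_mul_log_sub ha0 hb0 hm
    have hlog := mul_log_le_mul_log ha0 ha.2 hc.le
    have hcoef : 1 / (2 * c ^ 3) * (b - a) ^ 2 = (c ^ 3)⁻¹ * ((b - a) ^ 2 / 2) := by ring
    rw [hsplit, ← hsq]
    linarith [ha.1]
  · have hM : 1 ≤ c ^ 3 * min a b :=
      calc 1 = c * c⁻¹ := (mul_inv_cancel₀ hc0.ne').symm
        _ ≤ c ^ 3 * min a b := mul_le_mul hc3 (le_min ha.1 hb.1) (by positivity) (by positivity)
    have hD := sub_mul_log_sub_le_mul_sq ha0 hb0 hM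
    have hlog : 0 ≤ c⁻¹ * log c := mul_nonneg (inv_nonneg.2 hc0.le) (log_nonneg hc.le)
    rw [hsplit, ← hsq]
    linarith [sub_mul_log_le_one ha0.le]

theorem loss_equivalent_to_squared_loss_general {S : Type*} [Fintype S]
    (w : S → ℝ) (hw : ∀ s, w s ∈ Set.Icc (0 : ℝ) 1) (hsum : ∑ s, w s = 1)
    (c : ℝ) (hc : 1 < c) (y g : S → ℝ)
    (hy : ∀ s, c⁻¹ ≤ y s ∧ y s ≤ c) (hg : ∀ s, c⁻¹ ≤ g s ∧ g s ≤ c) :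
    (1 / (2 * c ^ 3)) * (∑ s, w s * (y s - g s) ^ 2) + (-c * Real.log c + c⁻¹)
        ≤ ∑ s, w s * (-y s * Real.log (g s) + g s) ∧
      ∑ s, w s * (-y s * Real.log (g s) + g s)
        ≤ (c ^ 3 / 2) * (∑ s, w s * (y s - g s) ^ 2) + (c⁻¹ * Real.log c + c) := by
  have hpointwise s := affine_bounds_of_mem_Icc hc (hy s) (hg s)
  have haverage {φ ψ : S → ℝ} (h : ∀ s, φ s ≤ ψ s) : ∑ s, w s * φ s ≤ ∑ s, w s * ψ s :=
    sum_le_sum fun s _ => mul_le_mul_of_nonneg_left (h s) (hw s).1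
  rw [← sum_mul_mul_add_const hsum, ← sum_mul_mul_add_const hsum]
  exact ⟨haverage fun s => (hpointwise s).1, haverage fun s => (hpointwise s).2⟩

/-- The generalized-I-divergence-type loss `R` majorizes and minorizes the squared loss `L`
up to affine transformations with explicit constants depending only on `c`
(paper's Proposition 3.3, with expectations written as weighted finite sums). -/
theorem loss_equivalent_to_squared_loss {S : Type*} [Fintype S] [Nonempty S]
    (w : S → ℝ) (hw : ∀ s, w s ∈ Set.Icc (0 : ℝ) 1) (hsum : ∑ s, w s = 1)
    (c : ℝ) (hc : 1 < c) (y g : S → ℝ)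
    (hy : ∀ s, c⁻¹ ≤ y s ∧ y s ≤ c) (hg : ∀ s, c⁻¹ ≤ g s ∧ g s ≤ c) :
    (1 / (2 * c ^ 3)) * (∑ s, w s * (y s - g s) ^ 2) + (-c * Real.log c + c⁻¹)
        ≤ ∑ s, w s * (-y s * Real.log (g s) + g s) ∧
      ∑ s, w s * (-y s * Real.log (g s) + g s)
        ≤ (c ^ 3 / 2) * (∑ s, w s * (y s - g s) ^ 2) + (c⁻¹ * Real.log c + c) :=
  loss_equivalent_to_squared_loss_general w hw hsum c hc y g hy hg
end

section
/- Fix integers p ≥ 1 and r_1,…,r_p ≥ 1 and pairwise disjoint facets F_1,…,F_m ⊆ {1,…,p}, each nonempty, and let M > 1. For a family U = (u^(1),…,u^(m)), where u^(k) is a real-valued function on ∏_{i∈F_k}{1,…,r_i}, say U ∈ Φ if there exist η, ν ∈ ℝ^m such that η_k ≤ u^(k)(ξ) ≤ ν_k for every k and every ξ, −2·log M ≤ η_k and ν_k ≤ 2·log M for every k, −log M ≤ Σ_{k=1}^m η_k, and Σ_{k=1}^m ν_k ≤ log M. Then U ∈ Φ if and only if the family Θ = (θ^(1),…,θ^(m))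 defined by θ^(k) = exp ∘ u^(k) belongs to Ω, i.e., satisfies M⁻¹ ≤ ∏_{k=1}^m θ^(k)(x|_{F_k}) ≤ M for every x ∈ 𝒳 and M⁻² ≤ θ^(k)(ξ) ≤ M² for every k and ξ. -/
/-- Equivalence of the LP-lifted constraint set `Φ` (in the log-parameters `u⁽ᵏ⁾`) with the
original constraint set `Ω` (in the parameters `θ⁽ᵏ⁾ = exp ∘ u⁽ᵏ⁾`), for pairwise disjoint
nonempty facets (paper's Proposition 3.4). -/
theorem lift_constraint_set_equivalence {p m : ℕ} (hp : 1 ≤ p)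
    (r : Fin p → ℕ) (hr : ∀ i, 1 ≤ r i)
    (F : Fin m → Finset (Fin p))
    (hdisj : ∀ k l, k ≠ l → Disjoint (F k) (F l))
    (hne : ∀ k, (F k).Nonempty)
    (M : ℝ) (hM : 1 < M)
    (u : ∀ k : Fin m, ((i : {i : Fin p // i ∈ F k}) → Fin (r i.1)) → ℝ) :
    (∃ η ν : Fin m → ℝ,
        (∀ (k : Fin m) (ξ : (i : {i : Fin p // i ∈ F k}) → Fin (r i.1)),
          η k ≤ u k ξ ∧ u k ξ ≤ ν k) ∧
        (∀ k, -(2 * Real.log M) ≤ η k ∧ ν k ≤ 2 * Real.log M) ∧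
        -Real.log M ≤ ∑ k, η k ∧ ∑ k, ν k ≤ Real.log M) ↔
      ((∀ x : ∀ i, Fin (r i),
          M⁻¹ ≤ ∏ k, Real.exp (u k (fun i => x i.1)) ∧
            ∏ k, Real.exp (u k (fun i => x i.1)) ≤ M) ∧
        (∀ (k : Fin m) (ξ : (i : {i : Fin p // i ∈ F k}) → Fin (r i.1)),
          (M ^ 2)⁻¹ ≤ Real.exp (u k ξ) ∧ Real.exp (u k ξ) ≤ M ^ 2)) := by
  classical
  have hM0 : (0:ℝ) < M := lt_trans one_pos hM
  have hexplog : Real.exp (Real.log M) = M := Real.exp_log hM0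
  have e2 : Real.exp (2 * Real.log M) = M ^ 2 := by
    rw [two_mul, Real.exp_add, hexplog, sq]
  have einv : (M ^ 2)⁻¹ = Real.exp (-(2 * Real.log M)) := by
    rw [Real.exp_neg, e2]
  have einvM : M⁻¹ = Real.exp (-Real.log M) := by
    rw [Real.exp_neg, hexplog]
  constructor
  · rintro ⟨η, ν, hb, hkb, hsl, hsu⟩
    constructor
    · intro x
      have hsum : ∏ k, Real.exp (u k fun i => x i.1)
          = Real.exp (∑ k, u k fun i => x i.1) := (Real.exp_sum _ _).symm
      constructor
      · rw [hsum, einvM, Real.exp_le_exp]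
        exact hsl.trans (Finset.sum_le_sum fun k _ => (hb k _).1)
      · rw [hsum, ← hexplog, Real.exp_le_exp]
        exact le_trans (Finset.sum_le_sum fun k _ => (hb k _).2) hsu
    · intro k ξ
      constructor
      · rw [einv, Real.exp_le_exp]
        exact le_trans (hkb k).1 (hb k ξ).1
      · rw [← e2, Real.exp_le_exp]
        exact le_trans (hb k ξ).2 (hkb k).2
  · rintro ⟨hprod, hbox⟩
    haveI hNE : ∀ k, Nonempty ((i : {i : Fin p // i ∈ F k}) → Fin (r i.1)) :=
      fun k => ⟨fun i => ⟨0, hr i.1⟩⟩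
    choose ξmin hmin using fun k => Finite.exists_min (u k)
    choose ξmax hmax using fun k => Finite.exists_max (u k)
    have key : ∀ ξs : ∀ k : Fin m, ((i : {i : Fin p // i ∈ F k}) → Fin (r i.1)),
        ∃ x : ∀ i, Fin (r i),
          ∀ k, (fun (i : {i : Fin p // i ∈ F k}) => x i.1) = ξs k := by
      intro ξs
      refine ⟨fun i => if h : ∃ k, i ∈ F k then ξs h.choose ⟨i, h.choose_spec⟩
        else ⟨0, hr i⟩, ?_⟩
      intro k
      funext i
      obtain ⟨i, hi⟩ := i
      have hex : ∃ k', i ∈ F k' := ⟨k, hi⟩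
      simp only [dif_pos hex]
      have hk : hex.choose = k := by
        by_contra hne'
        exact Finset.disjoint_left.mp (hdisj _ _ hne') hex.choose_spec hi
      have haux : ∀ (l : Fin m) (hl : i ∈ F l) (_ : l = k),
          (ξs l ⟨i, hl⟩ : Fin (r i)) = ξs k ⟨i, hi⟩ := by
        rintro l hl rfl; rfl
      exact haux hex.choose hex.choose_spec hk
    refine ⟨fun k => u k (ξmin k), fun k => u k (ξmax k),
      fun k ξ => ⟨hmin k ξ, hmax k ξ⟩, ?_, ?_, ?_⟩
    · intro k
      constructor
      · have := (hbox k (ξmin k)).1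
        rw [einv, Real.exp_le_exp] at this
        exact this
      · have := (hbox k (ξmax k)).2
        rw [← e2, Real.exp_le_exp] at this
        exact this
    · obtain ⟨x, hx⟩ := key ξmin
      have h1 := (hprod x).1
      have heq : ∏ k, Real.exp (u k fun i => x i.1)
          = Real.exp (∑ k, u k (ξmin k)) := by
        rw [← Real.exp_sum]
        exact congrArg Real.exp (Finset.sum_congr rfl fun k _ => by rw [hx k])
      rw [heq, einvM, Real.exp_le_exp] at h1
      exact h1
    · obtain ⟨x, hx⟩ := key ξmax
      have h1 := (hprod x).2
      have heq : ∏ k, Real.exp (u k fun i => x i.1)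
          = Real.exp (∑ k, u k (ξmax k)) := by
        rw [← Real.exp_sum]
        exact congrArg Real.exp (Finset.sum_congr rfl fun k _ => by rw [hx k])
      rw [heq, ← hexplog, Real.exp_le_exp] at h1
      exact h1
end

section
/- Fix integers p ≥ 1 and r_1,…,r_p ≥ 1, facets F_1,…,F_m ⊆ {1,…,p}, a constant M > 1, probability weights f : 𝒳 → [0,1] with Σ_{x∈𝒳} f_x = 1, and a function ψ : 𝒳 → ℝ. For a family U = (u^(1),…,u^(m)), where u^(k) is a real-valued function on ∏_{i∈F_k}{1,…,r_i}, define S_U(x) = Σ_{k=1}^m u^(k)(x|_{F_k}) and R(U) = Σ_{x∈𝒳} f_x·(−ψ_x·S_U(x) + exp(S_U(x))). Let Φ' be a convex set of such families satisfying |S_U(x)| ≤ log M for all U ∈ Φ' and all x ∈ 𝒳, and let U* ∈ Φ' satisfy R(U*) ≤ R(U) for all U ∈ Φ'. Then for every U ∈ Φ': R(U) − R(U*) ≥ (1/(2M))·Σ_{x∈𝒳} f_x·(S_U(x) − S_{U*}(x))². -/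
/-!
Each summand `u ↦ -ψ u + exp u` of the risk is `exp a`-strongly convex on `[a, ∞)`, and
`U ↦ S_U` is linear, so along the segment `U_t = (1 - t) U* + t U` the risk satisfies
`R(U_t) ≤ (1 - t) R(U*) + t R(U) - t (1 - t) c` with `c = (1 / 2M) ∑ f (S_U - S_U*)²`
(take `a = -log M`). Minimality gives `R(U*) ≤ R(U_t)`; dividing by `t` and letting `t → 0⁺`
yields `c ≤ R(U) - R(U*)`.
-/

open Real Set Filter Topology

theorem strongConvexOn_neg_mul_add_exp (a y : ℝ) :
    StrongConvexOn (Ici a) (exp a) fun u ↦ -y * u + exp u := by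
  rw [strongConvexOn_iff_convex]
  simp only [Real.norm_eq_abs, sq_abs]
  refine convexOn_of_hasDerivWithinAt2_nonneg (convex_Ici a)
    (f' := fun u ↦ -y + exp u - exp a * u) (f'' := fun u ↦ exp u - exp a) (by fun_prop)
    (fun u _ ↦ ?_) (fun u _ ↦ ?_) (fun u hu ↦ ?_)
  · exact ((((hasDerivAt_id u).const_mul (-y)).add (hasDerivAt_exp u)).sub
      ((hasDerivAt_pow 2 u).const_mul (exp a / 2))).hasDerivWithinAt.congr_deriv
      (by push_cast; ring)
  · exact ((hasDerivAt_const u (-y)).add (hasDerivAt_exp u)).sub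
      ((hasDerivAt_id u).const_mul (exp a)) |>.hasDerivWithinAt.congr_deriv (by simp)
  · rw [interior_Ici] at hu
    exact sub_nonneg.2 (exp_le_exp.2 hu.le)

/-- The risk `R` of the paper, as a function of the vector of linear statistics `s = S_U`. -/
noncomputable def weightedRisk {ι : Type*} [Fintype ι] (f ψ s : ι → ℝ) : ℝ :=
  ∑ x, f x * (-ψ x * s x + exp (s x))

theorem weightedRisk_segment_le {ι : Type*} [Fintype ι] {f ψ u v : ι → ℝ} {a t : ℝ}
    (hf : ∀ x, 0 ≤ f x) (hu : ∀ x, a ≤ u x) (hv : ∀ x, a ≤ v x) (ht₀ : 0 ≤ t) (ht₁ : t ≤ 1) :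
    weightedRisk f ψ ((1 - t) • u + t • v) ≤
      (1 - t) * weightedRisk f ψ u + t * weightedRisk f ψ v -
        t * (1 - t) * (exp a / 2 * ∑ x, f x * (v x - u x) ^ 2) := by
  simp only [weightedRisk, Finset.mul_sum, ← Finset.sum_add_distrib, ← Finset.sum_sub_distrib]
  refine Finset.sum_le_sum fun x _ ↦ ?_
  have h := (strongConvexOn_neg_mul_add_exp a (ψ x)).2 (hu x) (hv x) (sub_nonneg.2 ht₁) ht₀
    (sub_add_cancel 1 t)
  simp only [smul_eq_mul, Real.norm_eq_abs, sq_abs] at h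
  simp only [Pi.add_apply, Pi.smul_apply, smul_eq_mul]
  linear_combination mul_le_mul_of_nonneg_left h (hf x)

theorem IsMinOn.le_sub_of_segment_le {E : Type*} [AddCommGroup E] [Module ℝ E] {s : Set E}
    {g : E → ℝ} {x y : E} {c : ℝ} (hs : Convex ℝ s) (hmin : IsMinOn g s x) (hx : x ∈ s)
    (hy : y ∈ s)
    (hseg : ∀ t ∈ Ioo (0 : ℝ) 1,
      g ((1 - t) • x + t • y) ≤ (1 - t) * g x + t * g y - t * (1 - t) * c) :
    c ≤ g y - g x := by
  have hlim : Tendsto (fun t : ℝ ↦ (1 - t) * c) (𝓝[>] 0) (𝓝 c) := by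
    have : Tendsto (fun t : ℝ ↦ (1 - t) * c) (𝓝 0) (𝓝 ((1 - 0) * c)) :=
      ((continuous_const.sub continuous_id).mul continuous_const).tendsto 0
    simpa using this.mono_left nhdsWithin_le_nhds
  refine le_of_tendsto hlim (eventually_of_mem (Ioo_mem_nhdsGT one_pos) fun t ⟨ht₀, ht₁⟩ ↦ ?_)
  have hmid := isMinOn_iff.1 hmin _ (hs hx hy (sub_nonneg.2 ht₁.le) ht₀.le (sub_add_cancel 1 t))
  have hsegt := hseg t ⟨ht₀, ht₁⟩
  refine le_of_mul_le_mul_left ?_ ht₀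
  linarith

theorem excess_risk_lower_bound_linear_general {p m : ℕ}
    (r : Fin p → ℕ)
    (F : Fin m → Finset (Fin p)) (M : ℝ) (hM : 1 < M)
    (f : (∀ i, Fin (r i)) → ℝ) (hf : ∀ x, f x ∈ Set.Icc (0 : ℝ) 1)
    (ψ : (∀ i, Fin (r i)) → ℝ)
    (Φ' : Set (∀ k : Fin m, ((i : {i : Fin p // i ∈ F k}) → Fin (r i.1)) → ℝ))
    (hconv : Convex ℝ Φ')
    (hbound : ∀ U ∈ Φ', ∀ x : ∀ i, Fin (r i),
      |∑ k, U k (fun i => x i.1)| ≤ Real.log M)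
    (Ustar : ∀ k : Fin m, ((i : {i : Fin p // i ∈ F k}) → Fin (r i.1)) → ℝ)
    (hUstar : Ustar ∈ Φ')
    (hmin : ∀ U ∈ Φ',
      ∑ x, f x * (-ψ x * (∑ k, Ustar k (fun i => x i.1)) +
          Real.exp (∑ k, Ustar k (fun i => x i.1))) ≤
        ∑ x, f x * (-ψ x * (∑ k, U k (fun i => x i.1)) +
          Real.exp (∑ k, U k (fun i => x i.1)))) :
    ∀ U ∈ Φ',
      (∑ x, f x * (-ψ x * (∑ k, U k (fun i => x i.1)) +
          Real.exp (∑ k, U k (fun i => x i.1)))) -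
        (∑ x, f x * (-ψ x * (∑ k, Ustar k (fun i => x i.1)) +
          Real.exp (∑ k, Ustar k (fun i => x i.1)))) ≥
      (1 / (2 * M)) *
        ∑ x, f x * ((∑ k, U k (fun i => x i.1)) - (∑ k, Ustar k (fun i => x i.1))) ^ 2 := by
  intro U hU
  let S : (∀ k : Fin m, ((i : {i : Fin p // i ∈ F k}) → Fin (r i.1)) → ℝ) →
      (∀ i, Fin (r i)) → ℝ := fun V x ↦ ∑ k, V k fun i ↦ x i.1
  have hS_segment (t : ℝ) : S ((1 - t) • Ustar + t • U) = (1 - t) • S Ustar + t • S U := by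
    ext x
    simp only [S, Pi.add_apply, Pi.smul_apply, smul_eq_mul, Finset.sum_add_distrib,
      Finset.mul_sum]
  have hS_lower (V) (hV : V ∈ Φ') (x) : -log M ≤ S V x := neg_le_of_abs_le (hbound V hV x)
  have hconst : 1 / (2 * M) = exp (-log M) / 2 := by
    rw [exp_neg, exp_log (by linarith)]
    ring
  rw [ge_iff_le, hconst]
  refine IsMinOn.le_sub_of_segment_le (g := fun V ↦ weightedRisk f ψ (S V)) hconv
    (isMinOn_iff.2 hmin) hUstar hU fun t ht ↦ ?_
  simp only [hS_segment]
  exact weightedRisk_segment_le (fun x ↦ (hf x).1) (hS_lower Ustar hUstar) (hS_lower U hU)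
    ht.1.le ht.2.le

/-- Intermediate strong-convexity bound in the proof of the paper's Proposition 3.6:
for a minimizer `U*` of the reparametrized risk `R` over a convex constraint set `Φ'` on
which the linear statistics `S_U` are bounded by `log M`, the excess risk of any `U ∈ Φ'`
dominates `1/(2M)` times the weighted squared discrepancy of the linear statistics. -/
theorem excess_risk_lower_bound_linear {p m : ℕ} (hp : 1 ≤ p)
    (r : Fin p → ℕ) (hr : ∀ i, 1 ≤ r i)
    (F : Fin m → Finset (Fin p)) (M : ℝ) (hM : 1 < M)
    (f : (∀ i, Fin (r i)) → ℝ) (hf : ∀ x, f x ∈ Set.Icc (0 : ℝ) 1)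
    (hsum : ∑ x, f x = 1)
    (ψ : (∀ i, Fin (r i)) → ℝ)
    (Φ' : Set (∀ k : Fin m, ((i : {i : Fin p // i ∈ F k}) → Fin (r i.1)) → ℝ))
    (hconv : Convex ℝ Φ')
    (hbound : ∀ U ∈ Φ', ∀ x : ∀ i, Fin (r i),
      |∑ k, U k (fun i => x i.1)| ≤ Real.log M)
    (Ustar : ∀ k : Fin m, ((i : {i : Fin p // i ∈ F k}) → Fin (r i.1)) → ℝ)
    (hUstar : Ustar ∈ Φ')
    (hmin : ∀ U ∈ Φ',
      ∑ x, f x * (-ψ x * (∑ k, Ustar k (fun i => x i.1)) +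
          Real.exp (∑ k, Ustar k (fun i => x i.1))) ≤
        ∑ x, f x * (-ψ x * (∑ k, U k (fun i => x i.1)) +
          Real.exp (∑ k, U k (fun i => x i.1)))) :
    ∀ U ∈ Φ',
      (∑ x, f x * (-ψ x * (∑ k, U k (fun i => x i.1)) +
          Real.exp (∑ k, U k (fun i => x i.1)))) -
        (∑ x, f x * (-ψ x * (∑ k, Ustar k (fun i => x i.1)) +
          Real.exp (∑ k, Ustar k (fun i => x i.1)))) ≥
      (1 / (2 * M)) *
        ∑ x, f x * ((∑ k, U k (fun i => x i.1)) - (∑ k, Ustar k (fun i => x i.1))) ^ 2 :=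
  excess_risk_lower_bound_linear_general r F M hM f hf ψ Φ' hconv hbound Ustar hUstar hmin
end

section
/- Fix integers p ≥ 1 and r_1,…,r_p ≥ 1, facets F_1,…,F_m ⊆ {1,…,p}, a constant M > 1, probability weights f : 𝒳 → [0,1] with Σ_{x∈𝒳} f_x = 1, and a function ψ : 𝒳 → ℝ. For a family U = (u^(1),…,u^(m)), where u^(k) is a real-valued function on ∏_{i∈F_k}{1,…,r_i}, define S_U(x) = Σ_{k=1}^m u^(k)(x|_{F_k}) and R(U) = Σ_{x∈𝒳} f_x·(−ψ_x·S_U(x) + exp(S_U(x))). Let Φ' be a convex set of such families satisfying |S_U(x)| ≤ log M for all U ∈ Φ' and all x ∈ 𝒳, and let U* ∈ Φ' satisfy R(U*) ≤ R(U) for all U ∈ Φ'. Then for every U ∈ Φ': R(U) − R(U*) ≥ (1/(2M³))·Σ_{x∈𝒳} f_x·(exp(S_U(x)) − exp(S_{U*}(x)))². Equivalently, in the multiplicative parametrization θ^(k) = exp ∘ u^(k), the squared discrepancy Σ_x f_x·(∏_k θ^(k)(x|_{F_k}) − ∏_k θ*^(k)(x|_{F_k}))² is at most 2M³·(R(Θ)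 − R(Θ*)). -/
/-!
The risk is `Σ f · (-ψ S + exp S)` with `S = S_U` linear in `U`, and `exp` is `M⁻¹`-strongly convex
on `[-log M, log M]` (there `exp'' ≥ 1/M`). So along the segment from `U*` to `U` the risk lies below
its chord by `t(1-t)/(2M) · Σ f (S_U - S_U*)²`; minimality of `U*` and `t → 0` give
`R(U) - R(U*) ≥ Σ f (S_U - S_U*)² / (2M)`. Finally `exp` is `M`-Lipschitz on `(-∞, log M]`, which
trades the squared log-differences for squared value differences at the cost of a factor `M²`.
-/

open Real Set Filter Topology

lemma strongConvexOn_exp_Icc_log {M : ℝ} (hM : 0 < M) :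
    StrongConvexOn (Icc (-log M) (log M)) M⁻¹ exp := by
  rw [strongConvexOn_iff_convex]
  simp only [Real.norm_eq_abs, sq_abs]
  refine convexOn_of_hasDerivWithinAt2_nonneg (convex_Icc _ _) (by fun_prop)
    (f' := fun y => exp y - M⁻¹ * y) (f'' := fun y => exp y - M⁻¹) ?_ ?_ ?_
  · intro y _
    refine ((hasDerivAt_exp y).sub ((hasDerivAt_pow 2 y).const_mul (M⁻¹ / 2))).hasDerivWithinAt
      |>.congr_deriv ?_
    ring
  · intro y _
    exact ((hasDerivAt_exp y).sub ((hasDerivAt_id y).const_mul M⁻¹)).hasDerivWithinAt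
      |>.congr_deriv (by simp)
  · intro y hy
    rw [interior_Icc] at hy
    have : M⁻¹ ≤ exp y := by
      simpa [exp_neg, exp_log hM] using exp_le_exp.2 hy.1.le
    simpa using this

lemma abs_exp_sub_exp_le_of_le_log {M u v : ℝ} (hM : 0 < M) (hu : u ≤ log M) (hv : v ≤ log M) :
    |exp u - exp v| ≤ M * |u - v| := by
  have hderiv : ∀ y ∈ Iic (log M), ‖deriv exp y‖ ≤ M := fun y hy => by
    rw [Real.deriv_exp, norm_of_nonneg (exp_pos y).le, ← exp_log hM]
    exact exp_le_exp.2 hy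
  simpa only [Real.norm_eq_abs] using (convex_Iic (log M)).norm_image_sub_le_of_norm_deriv_le
    (fun _ _ => differentiableAt_exp) hderiv hv hu

lemma IsMinOn.le_sub_of_le_chord_sub {E : Type*} [AddCommGroup E] [Module ℝ E] {Φ : Set E}
    {R : E → ℝ} {x₀ x : E} {c : ℝ} (hmin : IsMinOn R Φ x₀) (hΦ : Convex ℝ Φ) (hx₀ : x₀ ∈ Φ)
    (hx : x ∈ Φ)
    (hR : ∀ ⦃a b : ℝ⦄, 0 ≤ a → 0 ≤ b → a + b = 1 →
      R (a • x₀ + b • x) ≤ a * R x₀ + b * R x - a * b * c) :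
    c ≤ R x - R x₀ := by
  have hsmall : ∀ b ∈ Ioo (0 : ℝ) 1, (1 - b) * c ≤ R x - R x₀ := by
    rintro b ⟨hb0, hb1⟩
    have hchord := (hmin (hΦ hx₀ hx (a := 1 - b) (by linarith) hb0.le (by ring))).trans
      (hR (a := 1 - b) (by linarith) hb0.le (by ring))
    have : b * ((1 - b) * c) ≤ b * (R x - R x₀) := by linarith
    exact le_of_mul_le_mul_left this hb0
  have hlim : Tendsto (fun b : ℝ => (1 - b) * c) (𝓝[>] 0) (𝓝 c) := by
    have hcont : Continuous fun b : ℝ => (1 - b) * c := by fun_prop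
    simpa using (hcont.tendsto 0).mono_left nhdsWithin_le_nhds
  exact le_of_tendsto hlim (eventually_of_mem (Ioo_mem_nhdsGT zero_lt_one) hsmall)

section PoissonRisk

variable {X : Type*} [Fintype X] (f ψ : X → ℝ)

noncomputable def poissonRisk (s : X → ℝ) : ℝ :=
  ∑ x, f x * (-ψ x * s x + exp (s x))

variable {f} {M : ℝ}

lemma poissonRisk_combo_le (hf : ∀ x, 0 ≤ f x) (hM : 0 < M) {s₀ s : X → ℝ}
    (hs₀ : ∀ x, |s₀ x| ≤ log M) (hs : ∀ x, |s x| ≤ log M) {a b : ℝ} (ha : 0 ≤ a) (hb : 0 ≤ b)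
    (hab : a + b = 1) :
    poissonRisk f ψ (a • s₀ + b • s) ≤ a * poissonRisk f ψ s₀ + b * poissonRisk f ψ s -
      a * b * ((2 * M)⁻¹ * ∑ x, f x * (s₀ x - s x) ^ 2) := by
  simp only [poissonRisk, Finset.mul_sum, ← Finset.sum_add_distrib, ← Finset.sum_sub_distrib]
  refine Finset.sum_le_sum fun x _ => ?_
  have hexp := (strongConvexOn_exp_Icc_log hM).2 (abs_le.1 (hs₀ x)) (abs_le.1 (hs x)) ha hb hab
  simp only [smul_eq_mul, Real.norm_eq_abs, sq_abs] at hexp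
  simp only [Pi.add_apply, Pi.smul_apply, smul_eq_mul]
  linear_combination mul_le_mul_of_nonneg_left hexp (hf x)

theorem sum_sq_exp_sub_le_poissonRisk_sub (hf : ∀ x, 0 ≤ f x) (hM : 0 < M)
    {C : Set (X → ℝ)} (hC : Convex ℝ C) (hbound : ∀ s ∈ C, ∀ x, |s x| ≤ log M)
    {s₀ s : X → ℝ} (hs₀ : s₀ ∈ C) (hmin : IsMinOn (poissonRisk f ψ) C s₀) (hs : s ∈ C) :
    ∑ x, f x * (exp (s x) - exp (s₀ x)) ^ 2 ≤
      2 * M ^ 3 * (poissonRisk f ψ s - poissonRisk f ψ s₀) := by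
  have hgap : (2 * M)⁻¹ * ∑ x, f x * (s₀ x - s x) ^ 2 ≤
      poissonRisk f ψ s - poissonRisk f ψ s₀ :=
    hmin.le_sub_of_le_chord_sub hC hs₀ hs fun _ _ ha hb hab =>
      poissonRisk_combo_le ψ hf hM (hbound s₀ hs₀) (hbound s hs) ha hb hab
  have hlip : ∑ x, f x * (exp (s x) - exp (s₀ x)) ^ 2 ≤
      M ^ 2 * ∑ x, f x * (s₀ x - s x) ^ 2 := by
    rw [Finset.mul_sum]
    refine Finset.sum_le_sum fun x _ => ?_
    have h := abs_exp_sub_exp_le_of_le_log hM (abs_le.1 (hbound s hs x)).2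
      (abs_le.1 (hbound s₀ hs₀ x)).2
    have hsq : (exp (s x) - exp (s₀ x)) ^ 2 ≤ M ^ 2 * (s₀ x - s x) ^ 2 := by
      rw [← sq_abs, ← sq_abs (s₀ x - s x), abs_sub_comm (s₀ x), ← mul_pow]
      exact pow_le_pow_left₀ (abs_nonneg _) h 2
    linear_combination mul_le_mul_of_nonneg_left hsq (hf x)
  calc ∑ x, f x * (exp (s x) - exp (s₀ x)) ^ 2
      ≤ 2 * M ^ 3 * ((2 * M)⁻¹ * ∑ x, f x * (s₀ x - s x) ^ 2) := by
        convert hlip using 1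
        field_simp
    _ ≤ 2 * M ^ 3 * (poissonRisk f ψ s - poissonRisk f ψ s₀) := by gcongr

end PoissonRisk

/-- The paper's `S_U(x) = Σ_k u⁽ᵏ⁾(x|_{F_k})`. -/
def facetSum {p m : ℕ} (r : Fin p → ℕ) (F : Fin m → Finset (Fin p)) :
    (∀ k : Fin m, ((i : {i : Fin p // i ∈ F k}) → Fin (r i.1)) → ℝ) →ₗ[ℝ]
      ((∀ i, Fin (r i)) → ℝ) where
  toFun U x := ∑ k, U k (fun i => x i.1)
  map_add' U V := by ext x; simp [Finset.sum_add_distrib]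
  map_smul' c U := by ext x; simp [Finset.mul_sum]

theorem excess_risk_lower_bound_values_general {p m : ℕ}
    (r : Fin p → ℕ)
    (F : Fin m → Finset (Fin p)) (M : ℝ) (hM : 1 < M)
    (f : (∀ i, Fin (r i)) → ℝ) (hf : ∀ x, f x ∈ Set.Icc (0 : ℝ) 1)
    (ψ : (∀ i, Fin (r i)) → ℝ)
    (Φ' : Set (∀ k : Fin m, ((i : {i : Fin p // i ∈ F k}) → Fin (r i.1)) → ℝ))
    (hconv : Convex ℝ Φ')
    (hbound : ∀ U ∈ Φ', ∀ x : ∀ i, Fin (r i),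
      |∑ k, U k (fun i => x i.1)| ≤ Real.log M)
    (Ustar : ∀ k : Fin m, ((i : {i : Fin p // i ∈ F k}) → Fin (r i.1)) → ℝ)
    (hUstar : Ustar ∈ Φ')
    (hmin : ∀ U ∈ Φ',
      ∑ x, f x * (-ψ x * (∑ k, Ustar k (fun i => x i.1)) +
          Real.exp (∑ k, Ustar k (fun i => x i.1))) ≤
        ∑ x, f x * (-ψ x * (∑ k, U k (fun i => x i.1)) +
          Real.exp (∑ k, U k (fun i => x i.1)))) :
    ∀ U ∈ Φ',
      ((∑ x, f x * (-ψ x * (∑ k, U k (fun i => x i.1)) +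
            Real.exp (∑ k, U k (fun i => x i.1)))) -
          (∑ x, f x * (-ψ x * (∑ k, Ustar k (fun i => x i.1)) +
            Real.exp (∑ k, Ustar k (fun i => x i.1)))) ≥
        (1 / (2 * M ^ 3)) *
          ∑ x, f x * (Real.exp (∑ k, U k (fun i => x i.1)) -
            Real.exp (∑ k, Ustar k (fun i => x i.1))) ^ 2) ∧
      (∑ x, f x * ((∏ k, Real.exp (U k (fun i => x i.1))) -
            ∏ k, Real.exp (Ustar k (fun i => x i.1))) ^ 2 ≤
        2 * M ^ 3 *
          ((∑ x, f x * (-ψ x * (∑ k, U k (fun i => x i.1)) +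
              Real.exp (∑ k, U k (fun i => x i.1)))) -
            (∑ x, f x * (-ψ x * (∑ k, Ustar k (fun i => x i.1)) +
              Real.exp (∑ k, Ustar k (fun i => x i.1)))))) := by
  intro U hU
  have key := sum_sq_exp_sub_le_poissonRisk_sub ψ (fun x => (hf x).1) (by linarith)
    (hconv.linear_image (facetSum r F)) (by rintro _ ⟨V, hV, rfl⟩; exact hbound V hV)
    (mem_image_of_mem _ hUstar) (by rintro _ ⟨V, hV, rfl⟩; exact hmin V hV)
    (mem_image_of_mem _ hU)
  refine ⟨?_, ?_⟩
  · rw [ge_iff_le, one_div, inv_mul_le_iff₀ (by positivity)]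
    exact key
  · simp only [← exp_sum]
    exact key

/-- Paper's Proposition 3.6: the weighted squared discrepancy of the tensor values is
controlled by `2M³` times the excess risk, for any minimizer `U*` of the reparametrized
risk over a convex constraint set `Φ'` with `|S_U| ≤ log M`.  The second conclusion is the
equivalent multiplicative formulation in the parameters `θ⁽ᵏ⁾ = exp ∘ u⁽ᵏ⁾`. -/
theorem excess_risk_lower_bound_values {p m : ℕ} (hp : 1 ≤ p)
    (r : Fin p → ℕ) (hr : ∀ i, 1 ≤ r i)
    (F : Fin m → Finset (Fin p)) (M : ℝ) (hM : 1 < M)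
    (f : (∀ i, Fin (r i)) → ℝ) (hf : ∀ x, f x ∈ Set.Icc (0 : ℝ) 1)
    (hsum : ∑ x, f x = 1)
    (ψ : (∀ i, Fin (r i)) → ℝ)
    (Φ' : Set (∀ k : Fin m, ((i : {i : Fin p // i ∈ F k}) → Fin (r i.1)) → ℝ))
    (hconv : Convex ℝ Φ')
    (hbound : ∀ U ∈ Φ', ∀ x : ∀ i, Fin (r i),
      |∑ k, U k (fun i => x i.1)| ≤ Real.log M)
    (Ustar : ∀ k : Fin m, ((i : {i : Fin p // i ∈ F k}) → Fin (r i.1)) → ℝ)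
    (hUstar : Ustar ∈ Φ')
    (hmin : ∀ U ∈ Φ',
      ∑ x, f x * (-ψ x * (∑ k, Ustar k (fun i => x i.1)) +
          Real.exp (∑ k, Ustar k (fun i => x i.1))) ≤
        ∑ x, f x * (-ψ x * (∑ k, U k (fun i => x i.1)) +
          Real.exp (∑ k, U k (fun i => x i.1)))) :
    ∀ U ∈ Φ',
      ((∑ x, f x * (-ψ x * (∑ k, U k (fun i => x i.1)) +
            Real.exp (∑ k, U k (fun i => x i.1)))) -
          (∑ x, f x * (-ψ x * (∑ k, Ustar k (fun i => x i.1)) +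
            Real.exp (∑ k, Ustar k (fun i => x i.1)))) ≥
        (1 / (2 * M ^ 3)) *
          ∑ x, f x * (Real.exp (∑ k, U k (fun i => x i.1)) -
            Real.exp (∑ k, Ustar k (fun i => x i.1))) ^ 2) ∧
      (∑ x, f x * ((∏ k, Real.exp (U k (fun i => x i.1))) -
            ∏ k, Real.exp (Ustar k (fun i => x i.1))) ^ 2 ≤
        2 * M ^ 3 *
          ((∑ x, f x * (-ψ x * (∑ k, U k (fun i => x i.1)) +
              Real.exp (∑ k, U k (fun i => x i.1)))) -
            (∑ x, f x * (-ψ x * (∑ k, Ustar k (fun i => x i.1)) +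
              Real.exp (∑ k, Ustar k (fun i => x i.1)))))) :=
  excess_risk_lower_bound_values_general r F M hM f hf ψ Φ' hconv hbound Ustar hUstar hmin
end

section
/- Fix integers p ≥ 1 and r_1,…,r_p ≥ 1, facets F_1,…,F_m ⊆ {1,…,p}, a constant M > 1, and probability weights f : 𝒳 → (0,1] with f_x > 0 for all x and Σ_{x∈𝒳} f_x = 1. Let ψ : 𝒳 → ℝ satisfy M⁻¹ ≤ ψ_x ≤ M for all x, and suppose there exists Θ° ∈ Ω with ∏_{k=1}^m θ°^(k)(x|_{F_k}) = ψ_x for all x (the facet structure is correct). For Θ ∈ Ω write g_Θ(x) = ∏_{k=1}^m θ^(k)(x|_{F_k}), R(Θ) = Σ_x f_x·(−ψ_x·log g_Θ(x) + g_Θ(x)), and L(Θ) = Σ_x f_x·(ψ_x − g_Θ(x))². Then for Θ* ∈ Ω the following are equivalent: (i) Θ* minimizes R over Ω; (ii) g_{Θ*}(x) = ψ_x for all x ∈ 𝒳; (iii) Θ* minimizes L over Ω. -/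
private lemma idiv_le {a t : ℝ} (ha : 0 < a) (ht : 0 < t) :
    -a * Real.log a + a ≤ -a * Real.log t + t := by
  have h := Real.log_le_sub_one_of_pos (div_pos ht ha)
  rw [Real.log_div ht.ne' ha.ne'] at h
  have h2 : a * (Real.log t - Real.log a) ≤ a * (t / a - 1) :=
    mul_le_mul_of_nonneg_left h ha.le
  have h3 : a * (t / a - 1) = t - a := by field_simp
  rw [mul_sub, h3] at h2
  linarith

private lemma idiv_lt {a t : ℝ} (ha : 0 < a) (ht : 0 < t) (hne : t ≠ a) :
    -a * Real.log a + a < -a * Real.log t + t := by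
  have hone : t / a ≠ 1 := by
    intro h1
    rw [div_eq_one_iff_eq ha.ne'] at h1
    exact hne h1
  have h := Real.log_lt_sub_one_of_pos (div_pos ht ha) hone
  rw [Real.log_div ht.ne' ha.ne'] at h
  have h2 : a * (Real.log t - Real.log a) < a * (t / a - 1) :=
    (mul_lt_mul_iff_right₀ ha).2 h
  have h3 : a * (t / a - 1) = t - a := by field_simp
  rw [mul_sub, h3] at h2
  linarith

/-- Population version of the paper's Proposition 3.2: over the constraint set `Ω`, and when
the facet structure is correct for a bounded positive tensor `ψ`, the following are
equivalent for `Θ* ∈ Ω`: (i) `Θ*` minimizes the generalized-I-divergence risk `R`;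
(ii) the tensor values of `Θ*` equal `ψ`; (iii) `Θ*` minimizes the squared loss `L`. -/
theorem risk_and_squared_loss_same_minimizers {p m : ℕ} (hp : 1 ≤ p)
    (r : Fin p → ℕ) (hr : ∀ i, 1 ≤ r i)
    (F : Fin m → Finset (Fin p)) (M : ℝ) (hM : 1 < M)
    (f : (∀ i, Fin (r i)) → ℝ) (hfpos : ∀ x, 0 < f x) (hfle : ∀ x, f x ≤ 1)
    (hsum : ∑ x, f x = 1)
    (ψ : (∀ i, Fin (r i)) → ℝ) (hψ : ∀ x, M⁻¹ ≤ ψ x ∧ ψ x ≤ M)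
    (Ω : Set (∀ k : Fin m, ((i : {i : Fin p // i ∈ F k}) → Fin (r i.1)) → ℝ))
    (hΩ : ∀ Θ, Θ ∈ Ω ↔
      ((∀ x : ∀ i, Fin (r i),
          M⁻¹ ≤ ∏ k, Θ k (fun i => x i.1) ∧ ∏ k, Θ k (fun i => x i.1) ≤ M) ∧
        (∀ (k : Fin m) (ξ : (i : {i : Fin p // i ∈ F k}) → Fin (r i.1)),
          (M ^ 2)⁻¹ ≤ Θ k ξ ∧ Θ k ξ ≤ M ^ 2)))
    (Θcirc : ∀ k : Fin m, ((i : {i : Fin p // i ∈ F k}) → Fin (r i.1)) → ℝ)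
    (hΘcirc : Θcirc ∈ Ω)
    (hcorrect : ∀ x : ∀ i, Fin (r i), ∏ k, Θcirc k (fun i => x i.1) = ψ x)
    (Θstar : ∀ k : Fin m, ((i : {i : Fin p // i ∈ F k}) → Fin (r i.1)) → ℝ)
    (hΘstar : Θstar ∈ Ω) :
    ((∀ Θ ∈ Ω,
        ∑ x, f x * (-ψ x * Real.log (∏ k, Θstar k (fun i => x i.1)) +
            ∏ k, Θstar k (fun i => x i.1)) ≤
          ∑ x, f x * (-ψ x * Real.log (∏ k, Θ k (fun i => x i.1)) +
            ∏ k, Θ k (fun i => x i.1))) ↔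
      (∀ x : ∀ i, Fin (r i), ∏ k, Θstar k (fun i => x i.1) = ψ x)) ∧
    ((∀ x : ∀ i, Fin (r i), ∏ k, Θstar k (fun i => x i.1) = ψ x) ↔
      (∀ Θ ∈ Ω,
        ∑ x, f x * (ψ x - ∏ k, Θstar k (fun i => x i.1)) ^ 2 ≤
          ∑ x, f x * (ψ x - ∏ k, Θ k (fun i => x i.1)) ^ 2)) := by
  have hMpos : (0:ℝ) < M := lt_trans one_pos hM
  have hMinv : (0:ℝ) < M⁻¹ := inv_pos.2 hMpos
  have hψpos : ∀ x, 0 < ψ x := fun x => lt_of_lt_of_le hMinv (hψ x).1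
  have gpos : ∀ Θ ∈ Ω, ∀ x : ∀ i, Fin (r i),
      (0:ℝ) < ∏ k, Θ k (fun i => x i.1) := by
    intro Θ hΘ x
    exact lt_of_lt_of_le hMinv (((hΩ Θ).1 hΘ).1 x).1
  have gstar := gpos Θstar hΘstar
  constructor
  · constructor
    · -- (i) → (ii)
      intro hmin x
      have key := hmin Θcirc hΘcirc
      have hrw : (∑ x, f x * (-ψ x * Real.log (∏ k, Θcirc k (fun i => x i.1)) +
            ∏ k, Θcirc k (fun i => x i.1)))
          = ∑ x, f x * (-ψ x * Real.log (ψ x) + ψ x) := by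
        refine Finset.sum_congr rfl fun y _ => ?_
        rw [hcorrect y]
      rw [hrw] at key
      -- each term nonneg and sum of differences ≤ 0
      have hterm : ∀ y : ∀ i, Fin (r i),
          f y * (-ψ y * Real.log (ψ y) + ψ y)
            ≤ f y * (-ψ y * Real.log (∏ k, Θstar k (fun i => y i.1)) +
              ∏ k, Θstar k (fun i => y i.1)) := fun y =>
        mul_le_mul_of_nonneg_left (idiv_le (hψpos y) (gstar y)) (hfpos y).le
      by_contra hne
      have hlt : f x * (-ψ x * Real.log (ψ x) + ψ x)
          < f x * (-ψ x * Real.log (∏ k, Θstar k (fun i => x i.1)) +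
            ∏ k, Θstar k (fun i => x i.1)) :=
        (mul_lt_mul_iff_right₀ (hfpos x)).2 (idiv_lt (hψpos x) (gstar x) hne)
      have hsumlt : (∑ y, f y * (-ψ y * Real.log (ψ y) + ψ y))
          < ∑ y, f y * (-ψ y * Real.log (∏ k, Θstar k (fun i => y i.1)) +
              ∏ k, Θstar k (fun i => y i.1)) := by
        refine Finset.sum_lt_sum (fun y _ => hterm y) ⟨x, Finset.mem_univ x, hlt⟩
      linarith
    · -- (ii) → (i)
      intro hstar Θ hΘ
      have hrw : (∑ x, f x * (-ψ x * Real.log (∏ k, Θstar k (fun i => x i.1)) +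
            ∏ k, Θstar k (fun i => x i.1)))
          = ∑ x, f x * (-ψ x * Real.log (ψ x) + ψ x) := by
        refine Finset.sum_congr rfl fun y _ => ?_
        rw [hstar y]
      rw [hrw]
      refine Finset.sum_le_sum fun y _ =>
        mul_le_mul_of_nonneg_left (idiv_le (hψpos y) (gpos Θ hΘ y)) (hfpos y).le
  · constructor
    · -- (ii) → (iii)
      intro hstar Θ hΘ
      have hrw : (∑ x, f x * (ψ x - ∏ k, Θstar k (fun i => x i.1)) ^ 2) = 0 := by
        refine Finset.sum_eq_zero fun y _ => ?_
        rw [hstar y]; ring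
      rw [hrw]
      exact Finset.sum_nonneg fun y _ =>
        mul_nonneg (hfpos y).le (sq_nonneg _)
    · -- (iii) → (ii)
      intro hmin x
      have key := hmin Θcirc hΘcirc
      have hrw : (∑ x, f x * (ψ x - ∏ k, Θcirc k (fun i => x i.1)) ^ 2) = 0 := by
        refine Finset.sum_eq_zero fun y _ => ?_
        rw [hcorrect y]; ring
      rw [hrw] at key
      have hzero : ∀ y ∈ Finset.univ,
          f y * (ψ y - ∏ k, Θstar k (fun i => y i.1)) ^ 2 = 0 := by
        rw [← Finset.sum_eq_zero_iff_of_nonneg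
          (fun y _ => mul_nonneg (hfpos y).le (sq_nonneg _))]
        exact le_antisymm key (Finset.sum_nonneg fun y _ =>
          mul_nonneg (hfpos y).le (sq_nonneg _))
      have h := hzero x (Finset.mem_univ x)
      have h2 : (ψ x - ∏ k, Θstar k (fun i => x i.1)) ^ 2 = 0 :=
        (mul_eq_zero.1 h).resolve_left (hfpos x).ne'
      have := pow_eq_zero_iff (n := 2) (by norm_num) |>.1 h2
      linarith
end

section
/- Fix integers p ≥ 1 and r_1,…,r_p ≥ 1, facets F_1,…,F_m ⊆ {1,…,p}, and a constant M > 1. Let ψ : 𝒳 → ℝ satisfy M⁻¹ ≤ ψ_x ≤ M for all x, and let Θ* ∈ Ω satisfy ∏_{k=1}^m θ*^(k)(x|_{F_k}) = ψ_x for all x ∈ 𝒳. With uniform weights, define R(Θ) = (1/|𝒳|)·Σ_{x∈𝒳}(−ψ_x·log(∏_k θ^(k)(x|_{F_k})) + ∏_k θ^(k)(x|_{F_k})). Then for every Θ ∈ Ω: (1/|𝒳|)·Σ_{x∈𝒳}(ψ_x − ∏_{k=1}^m θ^(k)(x|_{F_k}))² ≤ 2M³·(R(Θ) − R(Θ*)),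 where |𝒳| = ∏_{i=1}^p r_i. -/
/-! Write `b = a x`. The excess Poisson loss `a (x - 1 - log x)` of predicting `b` instead of
`a` is at least `(a - b)² / (2 max a b)`: for `x ≤ 1` by the second-order bound
`log x ≤ x - 1 - (x - 1)² / 2`, for `x ≥ 1` by `log x ≤ sinh (log x)`. All values lie in
`[M⁻¹, M]`, so `max a b ≤ M ≤ M³`, and averaging over `𝒳` gives the theorem. -/

open Real Finset

/-- The Poisson negative log-likelihood of the mean `b` at the observation `a`, up to terms
depending on `a` alone; it is the summand of the risk `R`. -/
noncomputable def poissonLoss (a b : ℝ) : ℝ := -a * log b + b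

namespace Real

theorem log_le_sub_one_sub_sq_div_two {x : ℝ} (hx : 0 < x) (hx1 : x ≤ 1) :
    log x ≤ x - 1 - (x - 1) ^ 2 / 2 := by
  have hy : 0 ≤ 1 - x := by linarith
  have hseries := hasSum_pow_div_log_of_abs_lt_one (x := 1 - x)
    (by rw [abs_of_nonneg hy]; linarith)
  -- the terms of the series of `-log (1 - y)` are nonnegative: keep the first two
  have hpartial := sum_le_hasSum (range 2) (fun n _ => by positivity) hseries
  norm_num [sum_range_succ] at hpartial
  linarith

theorem log_le_sub_inv_div_two {x : ℝ} (hx : 1 ≤ x) : log x ≤ (x - x⁻¹) / 2 := by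
  rw [← sinh_log (by linarith)]
  exact self_le_sinh_iff.mpr (log_nonneg hx)

theorem sq_sub_one_le_two_mul_max_mul_sub_log {x : ℝ} (hx : 0 < x) :
    (x - 1) ^ 2 ≤ 2 * max 1 x * (x - 1 - log x) := by
  rcases le_total x 1 with hx1 | hx1
  · rw [max_eq_left hx1]
    linarith [log_le_sub_one_sub_sq_div_two hx hx1]
  · rw [max_eq_right hx1]
    have hlog := log_le_sub_inv_div_two hx1
    have hinv : x * x⁻¹ = 1 := mul_inv_cancel₀ hx.ne'
    nlinarith

end Real

theorem sq_sub_le_two_mul_max_mul_poissonLoss_sub_self {a b : ℝ} (ha : 0 < a) (hb : 0 < b) :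
    (a - b) ^ 2 ≤ 2 * max a b * (poissonLoss a b - poissonLoss a a) := by
  obtain ⟨x, hx, rfl⟩ : ∃ x, 0 < x ∧ b = a * x := ⟨b / a, by positivity, by field_simp⟩
  have hscaled := mul_le_mul_of_nonneg_left (sq_sub_one_le_two_mul_max_mul_sub_log hx) (sq_nonneg a)
  have hmax : max a (a * x) = a * max 1 x := by rw [mul_max_of_nonneg _ _ ha.le, mul_one]
  rw [poissonLoss, poissonLoss, log_mul ha.ne' hx.ne', hmax]
  calc (a - a * x) ^ 2 = a ^ 2 * (x - 1) ^ 2 := by ring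
    _ ≤ a ^ 2 * (2 * max 1 x * (x - 1 - log x)) := hscaled
    _ = _ := by ring

theorem sq_sub_le_two_mul_pow_three_mul_poissonLoss_sub_self {M a b : ℝ} (hM : 1 ≤ M)
    (ha : M⁻¹ ≤ a) (ha' : a ≤ M) (hb : M⁻¹ ≤ b) (hb' : b ≤ M) :
    (a - b) ^ 2 ≤ 2 * M ^ 3 * (poissonLoss a b - poissonLoss a a) := by
  have hMinv : 0 < M⁻¹ := by positivity
  have ha0 : 0 < a := hMinv.trans_le ha
  have hb0 : 0 < b := hMinv.trans_le hb
  have hmax := sq_sub_le_two_mul_max_mul_poissonLoss_sub_self ha0 hb0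
  have hexcess : 0 ≤ poissonLoss a b - poissonLoss a a :=
    (mul_nonneg_iff_of_pos_left (by positivity)).mp ((sq_nonneg _).trans hmax)
  calc (a - b) ^ 2 ≤ 2 * max a b * (poissonLoss a b - poissonLoss a a) := hmax
    _ ≤ 2 * M ^ 3 * (poissonLoss a b - poissonLoss a a) := by
        gcongr
        exact (max_le ha' hb').trans (le_self_pow₀ hM (by norm_num))

theorem average_squared_error_le_excess_risk_general {p m : ℕ}
    (r : Fin p → ℕ)
    (F : Fin m → Finset (Fin p)) (M : ℝ) (hM : 1 < M)
    (ψ : (∀ i, Fin (r i)) → ℝ) (hψ : ∀ x, M⁻¹ ≤ ψ x ∧ ψ x ≤ M)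
    (Ω : Set (∀ k : Fin m, ((i : {i : Fin p // i ∈ F k}) → Fin (r i.1)) → ℝ))
    (hΩ : ∀ Θ, Θ ∈ Ω ↔
      ((∀ x : ∀ i, Fin (r i),
          M⁻¹ ≤ ∏ k, Θ k (fun i => x i.1) ∧ ∏ k, Θ k (fun i => x i.1) ≤ M) ∧
        (∀ (k : Fin m) (ξ : (i : {i : Fin p // i ∈ F k}) → Fin (r i.1)),
          (M ^ 2)⁻¹ ≤ Θ k ξ ∧ Θ k ξ ≤ M ^ 2)))
    (Θstar : ∀ k : Fin m, ((i : {i : Fin p // i ∈ F k}) → Fin (r i.1)) → ℝ)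
    (hcorrect : ∀ x : ∀ i, Fin (r i), ∏ k, Θstar k (fun i => x i.1) = ψ x) :
    ∀ Θ ∈ Ω,
      (1 / ∏ i, (r i : ℝ)) *
          ∑ x : ∀ i, Fin (r i), (ψ x - ∏ k, Θ k (fun i => x i.1)) ^ 2 ≤
        2 * M ^ 3 *
          ((1 / ∏ i, (r i : ℝ)) *
              ∑ x : ∀ i, Fin (r i),
                (-ψ x * Real.log (∏ k, Θ k (fun i => x i.1)) +
                  ∏ k, Θ k (fun i => x i.1)) -
            (1 / ∏ i, (r i : ℝ)) *
              ∑ x : ∀ i, Fin (r i),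
                (-ψ x * Real.log (∏ k, Θstar k (fun i => x i.1)) +
                  ∏ k, Θstar k (fun i => x i.1))) := by
  intro Θ hΘ
  have hbounds := ((hΩ Θ).mp hΘ).1
  calc (1 / ∏ i, (r i : ℝ)) * ∑ x : ∀ i, Fin (r i), (ψ x - ∏ k, Θ k (fun i => x i.1)) ^ 2
      ≤ (1 / ∏ i, (r i : ℝ)) * ∑ x : ∀ i, Fin (r i), 2 * M ^ 3 *
          (poissonLoss (ψ x) (∏ k, Θ k (fun i => x i.1)) -
            poissonLoss (ψ x) (∏ k, Θstar k (fun i => x i.1))) := by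
        gcongr with x
        rw [hcorrect x]
        exact sq_sub_le_two_mul_pow_three_mul_poissonLoss_sub_self hM.le (hψ x).1 (hψ x).2
          (hbounds x).1 (hbounds x).2
    _ = _ := by
        rw [← mul_sum, sum_sub_distrib]
        simp only [poissonLoss]
        ring

/-- Deterministic content of the paper's Theorem 3.9 (equation (approx_error)): with uniform
weights, the average squared approximation error of any feasible decomposition `Θ ∈ Ω`
against a correctly decomposable bounded positive tensor `ψ` is at most `2M³` times its
excess risk relative to an exact decomposition `Θ*`. -/
theorem average_squared_error_le_excess_risk {p m : ℕ} (hp : 1 ≤ p)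
    (r : Fin p → ℕ) (hr : ∀ i, 1 ≤ r i)
    (F : Fin m → Finset (Fin p)) (M : ℝ) (hM : 1 < M)
    (ψ : (∀ i, Fin (r i)) → ℝ) (hψ : ∀ x, M⁻¹ ≤ ψ x ∧ ψ x ≤ M)
    (Ω : Set (∀ k : Fin m, ((i : {i : Fin p // i ∈ F k}) → Fin (r i.1)) → ℝ))
    (hΩ : ∀ Θ, Θ ∈ Ω ↔
      ((∀ x : ∀ i, Fin (r i),
          M⁻¹ ≤ ∏ k, Θ k (fun i => x i.1) ∧ ∏ k, Θ k (fun i => x i.1) ≤ M) ∧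
        (∀ (k : Fin m) (ξ : (i : {i : Fin p // i ∈ F k}) → Fin (r i.1)),
          (M ^ 2)⁻¹ ≤ Θ k ξ ∧ Θ k ξ ≤ M ^ 2)))
    (Θstar : ∀ k : Fin m, ((i : {i : Fin p // i ∈ F k}) → Fin (r i.1)) → ℝ)
    (hΘstar : Θstar ∈ Ω)
    (hcorrect : ∀ x : ∀ i, Fin (r i), ∏ k, Θstar k (fun i => x i.1) = ψ x) :
    ∀ Θ ∈ Ω,
      (1 / ∏ i, (r i : ℝ)) *
          ∑ x : ∀ i, Fin (r i), (ψ x - ∏ k, Θ k (fun i => x i.1)) ^ 2 ≤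
        2 * M ^ 3 *
          ((1 / ∏ i, (r i : ℝ)) *
              ∑ x : ∀ i, Fin (r i),
                (-ψ x * Real.log (∏ k, Θ k (fun i => x i.1)) +
                  ∏ k, Θ k (fun i => x i.1)) -
            (1 / ∏ i, (r i : ℝ)) *
              ∑ x : ∀ i, Fin (r i),
                (-ψ x * Real.log (∏ k, Θstar k (fun i => x i.1)) +
                  ∏ k, Θstar k (fun i => x i.1))) :=
  average_squared_error_le_excess_risk_general r F M hM ψ hψ Ω hΩ Θstar hcorrect
end

section
/- Fix integers p ≥ 1 and r_1,…,r_p ≥ 1, and let F_1,…,F_m be a partition of {1,…,p}. Let f : 𝒳 → (0,1] be probability weights with f_x > 0 for all x and Σ_{x∈𝒳} f_x = 1, and suppose the facet subvectors x|_{F_1},…,x|_{F_m} are mutually independent under f (i.e., f factorizes as f_x = ∏_{k=1}^m f_k(x|_{F_k}) for probability weights f_k on ∏_{i∈F_k}{1,…,r_i}). Let ψ_x = ∏_{k=1}^m θ^(k)(x|_{F_k}) with each θ^(k) strictly positive and M⁻¹ ≤ ψ_x ≤ M for all x, where M > 1. Fix coordinates j ∈ F_1 and q ∈ F_2 with F_1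 ≠ F_2. For β : {1,…,r_j}×{1,…,r_q} → ℝ define R_{jq}(β) = Σ_{x∈𝒳} f_x·(−ψ_x·log β(x_j, x_q) + β(x_j, x_q)), and for β̄ : {1,…,r_j} → ℝ and β̃ : {1,…,r_q} → ℝ define R̄_{jq}(β̄, β̃) = Σ_{x∈𝒳} f_x·(−ψ_x·(log β̄(x_j) + log β̃(x_q)) + β̄(x_j)·β̃(x_q)). Then min{ R̄_{jq}(β̄, β̃) : M⁻¹ ≤ β̄(a)·β̃(b) ≤ M and M⁻² ≤ β̄(a) ≤ M² and M⁻² ≤ β̃(b) ≤ M² for all (a,b) } = min{ R_{jq}(β) : M⁻¹ ≤ β(a,b) ≤ M for all (a,b) }; that is, the risk gap 𝒢_{jq} between the rank-one-constrained two-variable problem and the unconstrained two-variable problem is zero. -/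
open Finset

lemma master_factor {p m : ℕ} (r : Fin p → ℕ) (F : Fin m → Finset (Fin p))
    (hdisj : ∀ k l, k ≠ l → Disjoint (F k) (F l))
    (hcover : ∀ i : Fin p, ∃ k, i ∈ F k)
    (g : ∀ k : Fin m, ((i : {i : Fin p // i ∈ F k}) → Fin (r i.1)) → ℝ) :
    ∑ x : ∀ i, Fin (r i), ∏ k, g k (fun i => x i.1) = ∏ k, ∑ ξ, g k ξ := by
  classical
  choose K hK using hcover
  have huniq : ∀ i k, i ∈ F k → K i = k := by
    intro i k hik
    by_contra h
    exact Finset.disjoint_left.mp (hdisj _ _ h) (hK i) hik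
  let E : (∀ i, Fin (r i)) ≃ (∀ k : Fin m, (i : {i : Fin p // i ∈ F k}) → Fin (r i.1)) :=
    { toFun := fun x k i => x i.1
      invFun := fun ξ i => ξ (K i) ⟨i, hK i⟩
      left_inv := fun x => rfl
      right_inv := by
        intro ξ
        funext k i
        obtain ⟨i, hi⟩ := i
        have h : K i = k := huniq i k hi
        subst h
        rfl }
  have h2 := Equiv.sum_comp E (fun ξ => ∏ k, g k (ξ k))
  have h3 : ∀ x : ∀ i, Fin (r i), ∏ k, g k (E x k) = ∏ k, g k (fun i => x i.1) := fun _ => rfl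
  simp only [h3] at h2
  rw [h2, Finset.prod_univ_sum (fun _ => Finset.univ) (fun k ξ => g k ξ), Fintype.piFinset_univ]

lemma cross_sum {p m : ℕ} (r : Fin p → ℕ) (F : Fin m → Finset (Fin p))
    (hdisj : ∀ k l, k ≠ l → Disjoint (F k) (F l))
    (hcover : ∀ i : Fin p, ∃ k, i ∈ F k)
    (k₁ k₂ : Fin m) (hk : k₁ ≠ k₂) (j q : Fin p) (hj : j ∈ F k₁) (hq : q ∈ F k₂)
    (g : ∀ k : Fin m, ((i : {i : Fin p // i ∈ F k}) → Fin (r i.1)) → ℝ)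
    (a a₀ : Fin (r j)) (c c₀ : Fin (r q)) :
    (∑ x ∈ Finset.univ.filter (fun x : ∀ i, Fin (r i) => x j = a ∧ x q = c),
        ∏ k, g k (fun i => x i.1)) *
    (∑ x ∈ Finset.univ.filter (fun x : ∀ i, Fin (r i) => x j = a₀ ∧ x q = c₀),
        ∏ k, g k (fun i => x i.1)) =
    (∑ x ∈ Finset.univ.filter (fun x : ∀ i, Fin (r i) => x j = a ∧ x q = c₀),
        ∏ k, g k (fun i => x i.1)) *
    (∑ x ∈ Finset.univ.filter (fun x : ∀ i, Fin (r i) => x j = a₀ ∧ x q = c),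
        ∏ k, g k (fun i => x i.1)) := by
  classical
  have huniq : ∀ i (k l : Fin m), i ∈ F k → i ∈ F l → k = l := by
    intro i k l hik hil
    by_contra h
    exact Finset.disjoint_left.mp (hdisj _ _ h) hik hil
  -- modified block functions
  set G : Fin (r j) → Fin (r q) → ∀ k : Fin m,
      ((i : {i : Fin p // i ∈ F k}) → Fin (r i.1)) → ℝ :=
    fun a c k ξ =>
      (if h : j ∈ F k then (if ξ ⟨j, h⟩ = a then (1:ℝ) else 0) else 1) *
      ((if h : q ∈ F k then (if ξ ⟨q, h⟩ = c then (1:ℝ) else 0) else 1) * g k ξ) with hG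
  -- Step 1: each filtered sum factorizes
  have step1 : ∀ (a : Fin (r j)) (c : Fin (r q)),
      (∑ x ∈ Finset.univ.filter (fun x : ∀ i, Fin (r i) => x j = a ∧ x q = c),
        ∏ k, g k (fun i => x i.1)) = ∏ k, ∑ ξ, G a c k ξ := by
    intro a c
    rw [Finset.sum_filter, ← master_factor r F hdisj hcover (G a c)]
    refine Finset.sum_congr rfl (fun x _ => ?_)
    have hχj : (∏ k, (if h : j ∈ F k then
        (if (fun i : {i : Fin p // i ∈ F k} => x i.1) ⟨j, h⟩ = a then (1:ℝ) else 0) else 1)) =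
        if x j = a then 1 else 0 := by
      rw [Finset.prod_eq_single k₁]
      · rw [dif_pos hj]
      · intro b _ hb
        rw [dif_neg]
        intro hjb
        exact hb (huniq j b k₁ hjb hj)
      · intro h; exact absurd (Finset.mem_univ k₁) h
    have hχq : (∏ k, (if h : q ∈ F k then
        (if (fun i : {i : Fin p // i ∈ F k} => x i.1) ⟨q, h⟩ = c then (1:ℝ) else 0) else 1)) =
        if x q = c then 1 else 0 := by
      rw [Finset.prod_eq_single k₂]
      · rw [dif_pos hq]
      · intro b _ hb
        rw [dif_neg]
        intro hqb
        exact hb (huniq q b k₂ hqb hq)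
      · intro h; exact absurd (Finset.mem_univ k₂) h
    calc (if x j = a ∧ x q = c then ∏ k, g k (fun i => x i.1) else 0)
        = (if x j = a then (1:ℝ) else 0) * ((if x q = c then (1:ℝ) else 0) *
            ∏ k, g k (fun i => x i.1)) := by
          by_cases h1 : x j = a <;> by_cases h2 : x q = c <;> simp [h1, h2]
      _ = ∏ k, G a c k (fun i => x i.1) := by
          rw [hG]
          simp only
          rw [Finset.prod_mul_distrib, Finset.prod_mul_distrib, hχj, hχq]
  -- per-block cross identity
  have perk : ∀ k : Fin m, (∑ ξ, G a c k ξ) * (∑ ξ, G a₀ c₀ k ξ) =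
      (∑ ξ, G a c₀ k ξ) * (∑ ξ, G a₀ c k ξ) := by
    intro k
    by_cases hjk : j ∈ F k
    · have hqk : q ∉ F k := by
        intro hqk
        exact hk ((huniq j k k₁ hjk hj).symm.trans (huniq q k k₂ hqk hq))
      have e1 : ∀ a' : Fin (r j), ∀ c' c'' : Fin (r q),
          (∑ ξ, G a' c' k ξ) = ∑ ξ, G a' c'' k ξ := by
        intro a' c' c''
        simp only [hG, dif_neg hqk]
      rw [e1 a c c₀, e1 a₀ c₀ c]
    · have e1 : ∀ c' : Fin (r q), ∀ a' a'' : Fin (r j),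
          (∑ ξ, G a' c' k ξ) = ∑ ξ, G a'' c' k ξ := by
        intro c' a' a''
        simp only [hG, dif_neg hjk]
      rw [e1 c a a₀, e1 c₀ a a₀, mul_comm]
  rw [step1 a c, step1 a₀ c₀, step1 a c₀, step1 a₀ c, ← Finset.prod_mul_distrib,
    ← Finset.prod_mul_distrib]
  exact Finset.prod_congr rfl (fun k _ => perk k)

lemma log_cell_ineq {s t : ℝ} (hs : 0 < s) (ht : 0 < t) :
    s - s * Real.log s ≤ t - s * Real.log t := by
  have h1 : Real.log (t / s) ≤ t / s - 1 := Real.log_le_sub_one_of_pos (by positivity)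
  rw [Real.log_div ht.ne' hs.ne'] at h1
  have h2 := mul_le_mul_of_nonneg_left h1 hs.le
  have h3 : s * (t / s - 1) = t - s := by field_simp
  nlinarith

/-- Paper's Proposition 4.1: if coordinates `j` and `q` lie in distinct facets of a correct
partition and the facet subvectors are independent under the sampling weights `f`, then the
risk gap `𝒢_{jq}` is zero: the minimum of the rank-one-constrained two-variable problem
equals the minimum of the unconstrained two-variable problem. -/
theorem risk_gap_zero_for_decoupled_indices {p m : ℕ} (hp : 1 ≤ p)
    (r : Fin p → ℕ) (hr : ∀ i, 1 ≤ r i)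
    (F : Fin m → Finset (Fin p))
    (hdisj : ∀ k l, k ≠ l → Disjoint (F k) (F l))
    (hcover : ∀ i : Fin p, ∃ k, i ∈ F k)
    (f : (∀ i, Fin (r i)) → ℝ) (hfpos : ∀ x, 0 < f x) (hfle : ∀ x, f x ≤ 1)
    (hsum : ∑ x, f x = 1)
    (fk : ∀ k : Fin m, ((i : {i : Fin p // i ∈ F k}) → Fin (r i.1)) → ℝ)
    (hfk_nonneg : ∀ (k : Fin m) (ξ : (i : {i : Fin p // i ∈ F k}) → Fin (r i.1)), 0 ≤ fk k ξ)
    (hfk_sum : ∀ k : Fin m, ∑ ξ : (i : {i : Fin p // i ∈ F k}) → Fin (r i.1), fk k ξ = 1)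
    (hfact : ∀ x : ∀ i, Fin (r i), f x = ∏ k, fk k (fun i => x i.1))
    (θ : ∀ k : Fin m, ((i : {i : Fin p // i ∈ F k}) → Fin (r i.1)) → ℝ)
    (hθpos : ∀ (k : Fin m) (ξ : (i : {i : Fin p // i ∈ F k}) → Fin (r i.1)), 0 < θ k ξ)
    (ψ : (∀ i, Fin (r i)) → ℝ)
    (hψdef : ∀ x : ∀ i, Fin (r i), ψ x = ∏ k, θ k (fun i => x i.1))
    (M : ℝ) (hM : 1 < M) (hψ : ∀ x, M⁻¹ ≤ ψ x ∧ ψ x ≤ M)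
    (k₁ k₂ : Fin m) (hk : k₁ ≠ k₂)
    (j q : Fin p) (hj : j ∈ F k₁) (hq : q ∈ F k₂) :
    sInf ((fun b : (Fin (r j) → ℝ) × (Fin (r q) → ℝ) =>
        ∑ x, f x * (-ψ x * (Real.log (b.1 (x j)) + Real.log (b.2 (x q))) +
          b.1 (x j) * b.2 (x q))) ''
      {b : (Fin (r j) → ℝ) × (Fin (r q) → ℝ) |
        ∀ (a : Fin (r j)) (c : Fin (r q)),
          (M⁻¹ ≤ b.1 a * b.2 c ∧ b.1 a * b.2 c ≤ M) ∧
          ((M ^ 2)⁻¹ ≤ b.1 a ∧ b.1 a ≤ M ^ 2) ∧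
          ((M ^ 2)⁻¹ ≤ b.2 c ∧ b.2 c ≤ M ^ 2)}) =
    sInf ((fun β : Fin (r j) → Fin (r q) → ℝ =>
        ∑ x, f x * (-ψ x * Real.log (β (x j) (x q)) + β (x j) (x q))) ''
      {β : Fin (r j) → Fin (r q) → ℝ |
        ∀ (a : Fin (r j)) (c : Fin (r q)), M⁻¹ ≤ β a c ∧ β a c ≤ M}) := by
  classical
  have hM0 : (0:ℝ) < M := lt_trans zero_lt_one hM
  have hMinv : (0:ℝ) < M⁻¹ := inv_pos.mpr hM0
  have huniq : ∀ i (k l : Fin m), i ∈ F k → i ∈ F l → k = l := by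
    intro i k l hik hil
    by_contra h
    exact Finset.disjoint_left.mp (hdisj _ _ h) hik hil
  have hjq : j ≠ q := by
    intro h
    exact hk (huniq j k₁ k₂ hj (h ▸ hq))
  set w : Fin (r j) × Fin (r q) → ℝ := fun y => ∑ x ∈ Finset.univ.filter
      (fun x : ∀ i, Fin (r i) => x j = y.1 ∧ x q = y.2), f x with hwdef
  set S : Fin (r j) × Fin (r q) → ℝ := fun y => ∑ x ∈ Finset.univ.filter
      (fun x : ∀ i, Fin (r i) => x j = y.1 ∧ x q = y.2), f x * ψ x with hSdef
  set Ψ : Fin (r j) × Fin (r q) → ℝ := fun y => S y / w y with hΨdef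
  -- fibers are nonempty, so w is positive
  have hwpos : ∀ y : Fin (r j) × Fin (r q), 0 < w y := by
    intro y
    simp only [hwdef]
    apply Finset.sum_pos (fun x _ => hfpos x)
    refine ⟨Function.update (Function.update (fun i => ⟨0, hr i⟩) j y.1) q y.2, ?_⟩
    rw [Finset.mem_filter]
    refine ⟨Finset.mem_univ _, ?_, ?_⟩
    · rw [Function.update_of_ne hjq, Function.update_self]
    · rw [Function.update_self]
  have hψpos : ∀ x : ∀ i, Fin (r i), 0 < ψ x := fun x => lt_of_lt_of_le hMinv (hψ x).1
  have hS_lb : ∀ y : Fin (r j) × Fin (r q), M⁻¹ * w y ≤ S y := by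
    intro y
    simp only [hwdef, hSdef, Finset.mul_sum]
    exact Finset.sum_le_sum fun x _ => by
      rw [mul_comm]
      exact mul_le_mul_of_nonneg_left (hψ x).1 (hfpos x).le
  have hS_ub : ∀ y : Fin (r j) × Fin (r q), S y ≤ M * w y := by
    intro y
    simp only [hwdef, hSdef, Finset.mul_sum]
    exact Finset.sum_le_sum fun x _ => by
      rw [mul_comm M]
      exact mul_le_mul_of_nonneg_left (hψ x).2 (hfpos x).le
  have hΨ_lb : ∀ y : Fin (r j) × Fin (r q), M⁻¹ ≤ Ψ y := by
    intro y
    simp only [hΨdef]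
    rw [le_div_iff₀ (hwpos y)]
    exact hS_lb y
  have hΨ_ub : ∀ y : Fin (r j) × Fin (r q), Ψ y ≤ M := by
    intro y
    simp only [hΨdef]
    rw [div_le_iff₀ (hwpos y)]
    nlinarith [hS_ub y]
  have hΨpos : ∀ y : Fin (r j) × Fin (r q), 0 < Ψ y := fun y => lt_of_lt_of_le hMinv (hΨ_lb y)
  have hwΨ : ∀ y : Fin (r j) × Fin (r q), w y * Ψ y = S y := by
    intro y
    simp only [hΨdef]
    rw [mul_comm]
    exact div_mul_cancel₀ (S y) (hwpos y).ne'
  -- regrouping of the objective into fibers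
  have hre : ∀ φ : Fin (r j) × Fin (r q) → ℝ,
      ∑ x : ∀ i, Fin (r i), f x * (-ψ x * Real.log (φ (x j, x q)) + φ (x j, x q)) =
      ∑ y : Fin (r j) × Fin (r q), (-(S y) * Real.log (φ y) + w y * φ y) := by
    intro φ
    rw [← Finset.sum_fiberwise Finset.univ (fun x : ∀ i, Fin (r i) => (x j, x q))
      (fun x => f x * (-ψ x * Real.log (φ (x j, x q)) + φ (x j, x q)))]
    refine Finset.sum_congr rfl fun y _ => ?_
    have hfib : Finset.univ.filter (fun x : ∀ i, Fin (r i) => (x j, x q) = y) =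
        Finset.univ.filter (fun x : ∀ i, Fin (r i) => x j = y.1 ∧ x q = y.2) := by
      apply Finset.filter_congr
      intro x _
      simp [Prod.ext_iff]
    rw [hfib]
    have step : ∀ x ∈ Finset.univ.filter
        (fun x : ∀ i, Fin (r i) => x j = y.1 ∧ x q = y.2),
        f x * (-ψ x * Real.log (φ (x j, x q)) + φ (x j, x q)) =
        -Real.log (φ y) * (f x * ψ x) + φ y * f x := by
      intro x hx
      obtain ⟨-, h1, h2⟩ := Finset.mem_filter.mp hx
      have hxy : (x j, x q) = y := by rw [h1, h2]
      rw [hxy]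
      ring
    rw [Finset.sum_congr rfl step, Finset.sum_add_distrib, ← Finset.mul_sum, ← Finset.mul_sum]
    simp only [hSdef, hwdef]
    ring
  -- cell-wise lower bound
  have hcell : ∀ (y : Fin (r j) × Fin (r q)) (t : ℝ), 0 < t →
      -(S y) * Real.log (Ψ y) + w y * Ψ y ≤ -(S y) * Real.log t + w y * t := by
    intro y t ht
    have h2 := mul_le_mul_of_nonneg_left (log_cell_ineq (hΨpos y) ht) (hwpos y).le
    rw [← hwΨ y]
    nlinarith [h2]
  -- cross (rank-one) identity for Ψ
  have hScross : ∀ (a a₀ : Fin (r j)) (c c₀ : Fin (r q)),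
      S (a, c) * S (a₀, c₀) = S (a, c₀) * S (a₀, c) := by
    intro a a₀ c c₀
    have hrepr : ∀ (a : Fin (r j)) (c : Fin (r q)),
        (∑ x ∈ Finset.univ.filter (fun x : ∀ i, Fin (r i) => x j = a ∧ x q = c),
          ∏ k, (fk k (fun i => x i.1) * θ k (fun i => x i.1))) = S (a, c) := by
      intro a c
      simp only [hSdef]
      refine Finset.sum_congr rfl fun x _ => ?_
      rw [Finset.prod_mul_distrib, ← hfact x, ← hψdef x]
    have hc := cross_sum r F hdisj hcover k₁ k₂ hk j q hj hq
      (fun k ξ => fk k ξ * θ k ξ) a a₀ c c₀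
    rwa [hrepr a c, hrepr a₀ c₀, hrepr a c₀, hrepr a₀ c] at hc
  have hwcross : ∀ (a a₀ : Fin (r j)) (c c₀ : Fin (r q)),
      w (a, c) * w (a₀, c₀) = w (a, c₀) * w (a₀, c) := by
    intro a a₀ c c₀
    have hrepr : ∀ (a : Fin (r j)) (c : Fin (r q)),
        (∑ x ∈ Finset.univ.filter (fun x : ∀ i, Fin (r i) => x j = a ∧ x q = c),
          ∏ k, fk k (fun i => x i.1)) = w (a, c) := by
      intro a c
      simp only [hwdef]
      exact Finset.sum_congr rfl fun x _ => (hfact x).symm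
    have hc := cross_sum r F hdisj hcover k₁ k₂ hk j q hj hq fk a a₀ c c₀
    rwa [hrepr a c, hrepr a₀ c₀, hrepr a c₀, hrepr a₀ c] at hc
  have hΨcross : ∀ (a a₀ : Fin (r j)) (c c₀ : Fin (r q)),
      Ψ (a, c) * Ψ (a₀, c₀) = Ψ (a, c₀) * Ψ (a₀, c) := by
    intro a a₀ c c₀
    simp only [hΨdef]
    rw [div_mul_div_comm, div_mul_div_comm, hScross a a₀ c c₀, hwcross a a₀ c c₀]
  -- rank-one factors
  set a₀ : Fin (r j) := ⟨0, hr j⟩ with ha₀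
  set c₀ : Fin (r q) := ⟨0, hr q⟩ with hc₀
  set b₁ : Fin (r j) → ℝ := fun a => Ψ (a, c₀) with hb₁
  set b₂ : Fin (r q) → ℝ := fun c => Ψ (a₀, c) / Ψ (a₀, c₀) with hb₂
  have hb : ∀ (a : Fin (r j)) (c : Fin (r q)), b₁ a * b₂ c = Ψ (a, c) := by
    intro a c
    simp only [hb₁, hb₂]
    have h5 := (hΨpos (a₀, c₀)).ne'
    field_simp
    linear_combination -(hΨcross a a₀ c c₀)
  have hM2inv : ((M:ℝ) ^ 2)⁻¹ = M⁻¹ * M⁻¹ := by rw [sq, mul_inv]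
  have hMMinv : M * M⁻¹ = 1 := mul_inv_cancel₀ hM0.ne'
  have hb₁mem : ∀ a, (M ^ 2)⁻¹ ≤ b₁ a ∧ b₁ a ≤ M ^ 2 := by
    intro a
    constructor
    · refine le_trans ?_ (hΨ_lb (a, c₀))
      rw [hM2inv]
      nlinarith
    · refine le_trans (hΨ_ub (a, c₀)) ?_
      nlinarith
  have hb₂mem : ∀ c, (M ^ 2)⁻¹ ≤ b₂ c ∧ b₂ c ≤ M ^ 2 := by
    intro c
    have h1 := hΨ_lb (a₀, c); have h2 := hΨ_ub (a₀, c)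
    have h3 := hΨ_lb (a₀, c₀); have h4 := hΨ_ub (a₀, c₀)
    have h5 := hΨpos (a₀, c₀)
    constructor
    · simp only [hb₂]
      rw [le_div_iff₀ h5, hM2inv]
      nlinarith
    · simp only [hb₂]
      rw [div_le_iff₀ h5]
      nlinarith
  -- the common optimal value
  set vstar : ℝ := ∑ y : Fin (r j) × Fin (r q),
      (-(S y) * Real.log (Ψ y) + w y * Ψ y) with hvstar
  have hRHS : sInf ((fun β : Fin (r j) → Fin (r q) → ℝ =>
        ∑ x, f x * (-ψ x * Real.log (β (x j) (x q)) + β (x j) (x q))) ''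
      {β : Fin (r j) → Fin (r q) → ℝ |
        ∀ (a : Fin (r j)) (c : Fin (r q)), M⁻¹ ≤ β a c ∧ β a c ≤ M}) = vstar := by
    apply IsLeast.csInf_eq
    constructor
    · refine ⟨fun a c => Ψ (a, c), fun a c => ⟨hΨ_lb (a, c), hΨ_ub (a, c)⟩, ?_⟩
      rw [hvstar]
      exact hre Ψ
    · rintro v ⟨β, hβ, rfl⟩
      have hre2 := hre (fun y => β y.1 y.2)
      simp only at hre2
      rw [hvstar]
      rw [show (fun β : Fin (r j) → Fin (r q) → ℝ =>
          ∑ x, f x * (-ψ x * Real.log (β (x j) (x q)) + β (x j) (x q))) β =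
          ∑ x : ∀ i, Fin (r i),
            f x * (-ψ x * Real.log (β (x j) (x q)) + β (x j) (x q)) from rfl, hre2]
      exact Finset.sum_le_sum fun y _ =>
        hcell y (β y.1 y.2) (lt_of_lt_of_le hMinv (hβ y.1 y.2).1)
  have hM2pos : (0:ℝ) < (M ^ 2)⁻¹ := by positivity
  have hLHS : sInf ((fun b : (Fin (r j) → ℝ) × (Fin (r q) → ℝ) =>
        ∑ x, f x * (-ψ x * (Real.log (b.1 (x j)) + Real.log (b.2 (x q))) +
          b.1 (x j) * b.2 (x q))) ''
      {b : (Fin (r j) → ℝ) × (Fin (r q) → ℝ) |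
        ∀ (a : Fin (r j)) (c : Fin (r q)),
          (M⁻¹ ≤ b.1 a * b.2 c ∧ b.1 a * b.2 c ≤ M) ∧
          ((M ^ 2)⁻¹ ≤ b.1 a ∧ b.1 a ≤ M ^ 2) ∧
          ((M ^ 2)⁻¹ ≤ b.2 c ∧ b.2 c ≤ M ^ 2)}) = vstar := by
    apply IsLeast.csInf_eq
    constructor
    · refine ⟨(b₁, b₂), ?_, ?_⟩
      · intro a c
        refine ⟨⟨?_, ?_⟩, hb₁mem a, hb₂mem c⟩
        · rw [hb a c]; exact hΨ_lb (a, c)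
        · rw [hb a c]; exact hΨ_ub (a, c)
      · have hpos1 : ∀ a, 0 < b₁ a := fun a => lt_of_lt_of_le hM2pos (hb₁mem a).1
        have hpos2 : ∀ c, 0 < b₂ c := fun c => lt_of_lt_of_le hM2pos (hb₂mem c).1
        have step : ∀ x : ∀ i, Fin (r i),
            f x * (-ψ x * (Real.log (b₁ (x j)) + Real.log (b₂ (x q))) + b₁ (x j) * b₂ (x q)) =
            f x * (-ψ x * Real.log ((fun y : Fin (r j) × Fin (r q) => b₁ y.1 * b₂ y.2)
              (x j, x q)) + (fun y : Fin (r j) × Fin (r q) => b₁ y.1 * b₂ y.2) (x j, x q)) := by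
          intro x
          simp only
          rw [← Real.log_mul (hpos1 (x j)).ne' (hpos2 (x q)).ne']
        rw [show (fun b : (Fin (r j) → ℝ) × (Fin (r q) → ℝ) =>
            ∑ x, f x * (-ψ x * (Real.log (b.1 (x j)) + Real.log (b.2 (x q))) +
              b.1 (x j) * b.2 (x q))) (b₁, b₂) =
            ∑ x : ∀ i, Fin (r i),
              f x * (-ψ x * (Real.log (b₁ (x j)) + Real.log (b₂ (x q))) +
                b₁ (x j) * b₂ (x q)) from rfl]
        rw [Finset.sum_congr rfl (fun x _ => step x),
          hre (fun y => b₁ y.1 * b₂ y.2), hvstar]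
        refine Finset.sum_congr rfl fun y _ => ?_
        rw [hb y.1 y.2]
    · rintro v ⟨b, hbmem, rfl⟩
      have hpos1 : ∀ a, 0 < b.1 a := fun a =>
        lt_of_lt_of_le hM2pos ((hbmem a c₀).2.1).1
      have hpos2 : ∀ c, 0 < b.2 c := fun c =>
        lt_of_lt_of_le hM2pos ((hbmem a₀ c).2.2).1
      have step : ∀ x : ∀ i, Fin (r i),
          f x * (-ψ x * (Real.log (b.1 (x j)) + Real.log (b.2 (x q))) + b.1 (x j) * b.2 (x q)) =
          f x * (-ψ x * Real.log ((fun y : Fin (r j) × Fin (r q) => b.1 y.1 * b.2 y.2)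
            (x j, x q)) + (fun y : Fin (r j) × Fin (r q) => b.1 y.1 * b.2 y.2) (x j, x q)) := by
        intro x
        simp only
        rw [← Real.log_mul (hpos1 (x j)).ne' (hpos2 (x q)).ne']
      rw [hvstar]
      rw [show (fun b : (Fin (r j) → ℝ) × (Fin (r q) → ℝ) =>
          ∑ x, f x * (-ψ x * (Real.log (b.1 (x j)) + Real.log (b.2 (x q))) +
            b.1 (x j) * b.2 (x q))) b =
          ∑ x : ∀ i, Fin (r i),
            f x * (-ψ x * (Real.log (b.1 (x j)) + Real.log (b.2 (x q))) +
              b.1 (x j) * b.2 (x q)) from rfl]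
      rw [Finset.sum_congr rfl (fun x _ => step x), hre (fun y => b.1 y.1 * b.2 y.2)]
      exact Finset.sum_le_sum fun y _ =>
        hcell y (b.1 y.1 * b.2 y.2) (mul_pos (hpos1 y.1) (hpos2 y.2))
  rw [hLHS, hRHS]
end
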